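/- arXiv:2302.06713 — 2 statements merged into one kernel-verified Lean document; each statement's English description precedes it below -/
import Mathlib

section
/- Let H be a real Hilbert space, m ≥ 1 an integer, and for each l ∈ {1,…,m} let 0 ≤ σ_l < β_l ≤ +∞. Let {(𝐲_i, 𝐅_i, 𝐮_i)}_{i∈I} be a finite family of triplets in H^m × ℝ^m × H^m. Then the following are equivalent: (i) there exist functions f_1,…,f_m with f_l ∈ F_{σ_l,β_l}(H) such that for every i ∈ I and every l ∈ {1,…,m}, f_l((𝐲_i)_l) = (𝐅_i)_l and (𝐮_i)_l ∈ ∂f_l((𝐲_i)_l); (ii) for every l ∈ {1,…,m} and all i, j ∈ I, (𝐅_i)_l ≥ (𝐅_j)_l + ⟨(𝐮_j)_l, (𝐲_i)_l − (𝐲_j)_l⟩ + (σ_l/2)‖(𝐲_i)_l − (𝐲_j)_l‖² + c_l‖(𝐮_i)_l − (𝐮_j)_l − σ_l((𝐲_i)_l − (𝐲_j)_l)‖², where c_l = 1/(2(β_l − σ_l)) if β_l < +∞ and c_l = 0 if β_l = +∞. -/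
open scoped ENNReal

/-- `u` is a subgradient of `f` at `x`: `f z ≥ f x + ⟨u, z - x⟩` for all `z`. -/
def IsSubgradientAt {H : Type*} [NormedAddCommGroup H] [InnerProductSpace ℝ H]
    (f : H → ℝ) (u x : H) : Prop :=
  ∀ z : H, f x + (inner ℝ u (z - x) : ℝ) ≤ f z

/-- `f` is `σ`-strongly convex: `f - (σ/2)‖·‖²` is convex. -/
def StronglyConvex {H : Type*} [NormedAddCommGroup H] [InnerProductSpace ℝ H]
    (σ : ℝ) (f : H → ℝ) : Prop :=
  ConvexOn ℝ Set.univ (fun x => f x - σ / 2 * ‖x‖ ^ 2)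

/-- `f` is `β`-smooth: differentiable with `β`-Lipschitz gradient. -/
def IsSmoothWith {H : Type*} [NormedAddCommGroup H] [InnerProductSpace ℝ H]
    [CompleteSpace H] (β : ℝ) (f : H → ℝ) : Prop :=
  Differentiable ℝ f ∧ ∀ x y : H, ‖gradient f x - gradient f y‖ ≤ β * ‖x - y‖

/-- Membership in the function class `F_{σ,β}(H)`: σ-strongly convex, and β-smooth
if `β < +∞`, lower semicontinuous if `β = +∞`. -/
def MemFClass {H : Type*} [NormedAddCommGroup H] [InnerProductSpace ℝ H]
    [CompleteSpace H] (σ : ℝ) (β : ℝ≥0∞) (f : H → ℝ) : Prop :=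
  StronglyConvex σ f ∧ (β ≠ ⊤ → IsSmoothWith β.toReal f) ∧
    (β = ⊤ → LowerSemicontinuous f)

/-- The coefficient `c = 1/(2(β−σ))` if `β < +∞`, and `c = 0` if `β = +∞`. -/
noncomputable def interpCoeff (σ : ℝ) (β : ℝ≥0∞) : ℝ :=
  if β = ⊤ then 0 else 1 / (2 * (β.toReal - σ))

/-
Subtracting `σ/2 ‖·‖²` from a function, `σ/2 ‖y‖²` from its values and `σ • y` from its
subgradients changes the linearization gap `f z - f x - ⟪u, z - x⟫` by exactly `- σ/2 ‖z - x‖²`.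
This reduces everything to the case `σ = 0` with `β - σ` in place of `β`, one component `l` at a
time.

Necessity: for `β = ∞` the inequality is the subgradient inequality of the convex function
`f - σ/2 ‖·‖²`; for `β < ∞` it is the cocoercivity inequality of a convex `L`-smooth function
(`L = β - σ`), obtained by evaluating the descent lemma at `y - L⁻¹ (∇f y - ∇f x)`.

Sufficiency: for `β = ∞` the maximum of the affine functions `F j + ⟪u j, · - y j⟫`
interpolates. For `β < ∞` the dual data (points `u j`, slopes `y j`) satisfy the interpolation
inequality of `L⁻¹`-strongly convex functions, so a maximum of quadratics interpolates them; its
Fenchel conjugate is convex and `L`-smooth and interpolates the original data.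
-/

open RealInnerProductSpace Set Filter Topology

section Elementary

variable {H : Type*} [NormedAddCommGroup H] [InnerProductSpace ℝ H]

lemma linearization_gap_sub_half_mul_norm_sq (σ a b : ℝ) (u x z : H) :
    b - σ / 2 * ‖z‖ ^ 2 - (a - σ / 2 * ‖x‖ ^ 2) - ⟪u - σ • x, z - x⟫ =
      b - a - ⟪u, z - x⟫ - σ / 2 * ‖z - x‖ ^ 2 := by
  rw [norm_sub_sq_real, inner_sub_left, real_inner_smul_left, inner_sub_right, inner_sub_right,
    real_inner_self_eq_norm_sq, real_inner_comm x z]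
  ring

lemma real_inner_le_half_mul_norm_sq_add {μ : ℝ} (hμ : 0 < μ) (a b : H) :
    ⟪a, b⟫ ≤ μ⁻¹ / 2 * ‖a‖ ^ 2 + μ / 2 * ‖b‖ ^ 2 := by
  have h := norm_sub_sq_real a (μ • b)
  rw [real_inner_smul_right, norm_smul, Real.norm_of_nonneg hμ.le] at h
  have : 2 * μ * ⟪a, b⟫ ≤ ‖a‖ ^ 2 + μ ^ 2 * ‖b‖ ^ 2 := by nlinarith [sq_nonneg ‖a - μ • b‖]
  rw [← mul_le_mul_iff_of_pos_left (by positivity : 0 < 2 * μ)]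
  field_simp
  linarith

lemma le_of_forall_le_add_mul {a b K : ℝ} (h : ∀ t : ℝ, 0 < t → t ≤ 1 → a ≤ b + t * K) :
    a ≤ b := by
  have hlim : Tendsto (fun t : ℝ => b + t * K) (𝓝[>] 0) (𝓝 b) := by
    refine (Continuous.tendsto' ?_ 0 b (by simp)).mono_left nhdsWithin_le_nhds
    fun_prop
  refine ge_of_tendsto hlim ?_
  filter_upwards [Ioo_mem_nhdsGT one_pos] with t ht using h t ht.1 ht.2.le

end Elementary

section Subgradient

variable {H : Type*} [NormedAddCommGroup H] [InnerProductSpace ℝ H]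

lemma convexOn_univ_of_forall_exists_isSubgradientAt {f : H → ℝ}
    (h : ∀ x, ∃ g, IsSubgradientAt f g x) : ConvexOn ℝ univ f := by
  refine ⟨convex_univ, fun x _ z _ a b ha hb hab => ?_⟩
  obtain rfl : b = 1 - a := by linarith
  set m := a • x + (1 - a) • z
  obtain ⟨g, hg⟩ := h m
  have hx := mul_le_mul_of_nonneg_left (hg x) ha
  have hz := mul_le_mul_of_nonneg_left (hg z) hb
  have hsum : a * ⟪g, x - m⟫ + (1 - a) * ⟪g, z - m⟫ = 0 := by
    rw [← real_inner_smul_right, ← real_inner_smul_right, ← inner_add_right]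
    convert inner_zero_right g
    module
  simp only [smul_eq_mul]
  linarith

lemma ConvexOn.isSubgradientAt_of_sub_mul_norm_sq_le {f : H → ℝ} (hf : ConvexOn ℝ univ f)
    {g x : H} {K : ℝ} (h : ∀ z, f x + ⟪g, z - x⟫ - K * ‖z - x‖ ^ 2 ≤ f z) :
    IsSubgradientAt f g x := by
  intro z
  refine le_of_forall_le_add_mul (K := K * ‖z - x‖ ^ 2) fun t ht ht1 => ?_
  have hconv := hf.2 (mem_univ x) (mem_univ z) (sub_nonneg.2 ht1) ht.le (sub_add_cancel 1 t)
  have hline : (1 - t) • x + t • z = x + t • (z - x) := by module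
  have hlow := h (x + t • (z - x))
  rw [hline] at hconv
  rw [add_sub_cancel_left, real_inner_smul_right, norm_smul, Real.norm_of_nonneg ht.le,
    mul_pow] at hlow
  simp only [smul_eq_mul] at hconv
  nlinarith

lemma StronglyConvex.add_inner_add_le {σ : ℝ} {f : H → ℝ} (hf : StronglyConvex σ f) {u x : H}
    (hu : IsSubgradientAt f u x) (z : H) :
    f x + ⟪u, z - x⟫ + σ / 2 * ‖z - x‖ ^ 2 ≤ f z := by
  have key := ConvexOn.isSubgradientAt_of_sub_mul_norm_sq_le hf (g := u - σ • x) (x := x)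
    (K := σ / 2) fun w => by
      linarith [hu w, linearization_gap_sub_half_mul_norm_sq σ (f x) (f w) u x w]
  have := linearization_gap_sub_half_mul_norm_sq σ (f x) (f z) u x z
  linarith [key z]

lemma IsSubgradientAt.add_half_mul_norm_sq {σ : ℝ} (hσ : 0 ≤ σ) {f : H → ℝ} {v x : H}
    (hv : IsSubgradientAt f v x) :
    IsSubgradientAt (fun z => f z + σ / 2 * ‖z‖ ^ 2) (v + σ • x) x := by
  intro z
  have := linearization_gap_sub_half_mul_norm_sq σ (f x + σ / 2 * ‖x‖ ^ 2)
    (f z + σ / 2 * ‖z‖ ^ 2) (v + σ • x) x z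
  simp only [add_sub_cancel_right] at this
  show f x + σ / 2 * ‖x‖ ^ 2 + ⟪v + σ • x, z - x⟫ ≤ f z + σ / 2 * ‖z‖ ^ 2
  nlinarith [hv z, sq_nonneg ‖z - x‖]

lemma add_inner_add_norm_sq_le_of_convex_of_smooth {f : H → ℝ} {G : H → H} {L : ℝ} (hL : 0 < L)
    (hlow : ∀ x z, f x + ⟪G x, z - x⟫ ≤ f z)
    (hup : ∀ x z, f z ≤ f x + ⟪G x, z - x⟫ + L / 2 * ‖z - x‖ ^ 2) (x y : H) :
    f x + ⟪G x, y - x⟫ + 1 / (2 * L) * ‖G y - G x‖ ^ 2 ≤ f y := by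
  set e := G y - G x
  set w := y - L⁻¹ • e
  have h1 := hup y w
  have h2 := hlow x w
  have hwy : w - y = -(L⁻¹ • e) := by simp [w]
  have hwx : w - x = (y - x) - L⁻¹ • e := by simp only [w]; abel
  rw [hwy, inner_neg_right, real_inner_smul_right, norm_neg, norm_smul,
    Real.norm_of_nonneg (inv_nonneg.2 hL.le)] at h1
  rw [hwx, inner_sub_right, real_inner_smul_right] at h2
  have he : L⁻¹ * ⟪G y, e⟫ - L⁻¹ * ⟪G x, e⟫ = 2 * (1 / (2 * L) * ‖e‖ ^ 2) := by
    rw [← mul_sub, ← inner_sub_left]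
    change L⁻¹ * ⟪e, e⟫ = _
    rw [real_inner_self_eq_norm_sq]
    field_simp
  have hcoef : L / 2 * (L⁻¹ * ‖e‖) ^ 2 = 1 / (2 * L) * ‖e‖ ^ 2 := by field_simp
  rw [hcoef] at h1
  linarith

end Subgradient

section Gradient

variable {H : Type*} [NormedAddCommGroup H] [InnerProductSpace ℝ H] [CompleteSpace H]

lemma IsSubgradientAt.gradient_eq {f : H → ℝ} {u x : H}
    (hu : IsSubgradientAt f u x) (hf : DifferentiableAt ℝ f x) : gradient f x = u := by
  have hmin : IsMinOn (fun z => f z - ⟪u, z⟫) univ x := fun z _ => by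
    have := hu z
    rw [inner_sub_right] at this
    show f x - ⟪u, x⟫ ≤ f z - ⟪u, z⟫
    linarith
  have hderiv := (hmin.isLocalMin univ_mem).hasFDerivAt_eq_zero
    (hf.hasFDerivAt.sub (innerSL ℝ u).hasFDerivAt)
  rw [sub_eq_zero] at hderiv
  rw [gradient, hderiv]
  exact (InnerProductSpace.toDual ℝ H).symm_apply_apply u

lemma hasGradientAt_of_abs_sub_sub_inner_le {f : H → ℝ} {g x : H} {C : ℝ}
    (h : ∀ z, |f z - f x - ⟪g, z - x⟫| ≤ C * ‖z - x‖ ^ 2) : HasGradientAt f g x := by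
  rw [hasGradientAt_iff_isLittleO]
  have hO : (fun z => f z - f x - ⟪g, z - x⟫) =O[𝓝 x] fun z => ‖z - x‖ ^ 2 :=
    Asymptotics.IsBigO.of_bound C (Eventually.of_forall fun z => by simpa using h z)
  refine hO.trans_isLittleO ((Asymptotics.isLittleO_norm_pow_id one_lt_two).comp_tendsto ?_)
  exact tendsto_sub_nhds_zero_iff.2 tendsto_id

lemma abs_sub_sub_inner_gradient_le {f : H → ℝ} {L : ℝ} (hf : Differentiable ℝ f)
    (hlip : ∀ x y, ‖gradient f x - gradient f y‖ ≤ L * ‖x - y‖) (x z : H) :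
    |f z - f x - ⟪gradient f x, z - x⟫| ≤ L / 2 * ‖z - x‖ ^ 2 := by
  set d := z - x
  set φ : ℝ → ℝ := fun t => f (x + t • d) - f x - t * ⟪gradient f x, d⟫
  have hφ : ∀ t, HasDerivAt φ (⟪gradient f (x + t • d), d⟫ - ⟪gradient f x, d⟫) t := by
    intro t
    have hline : HasDerivAt (fun s : ℝ => x + s • d) d t := by
      simpa using ((hasDerivAt_id t).smul_const d).const_add x
    have hcomp := (hf (x + t • d)).hasGradientAt.hasFDerivAt.comp_hasDerivAt t hline
    simp only [InnerProductSpace.toDual_apply_apply] at hcomp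
    exact (hcomp.sub_const (f x)).sub (hasDerivAt_mul_const _)
  have hbound : ∀ t ∈ Ico (0 : ℝ) 1,
      ‖⟪gradient f (x + t • d), d⟫ - ⟪gradient f x, d⟫‖ ≤ L * ‖d‖ ^ 2 * t := by
    intro t ht
    rw [← inner_sub_left, Real.norm_eq_abs]
    calc |⟪gradient f (x + t • d) - gradient f x, d⟫|
        ≤ ‖gradient f (x + t • d) - gradient f x‖ * ‖d‖ := abs_real_inner_le_norm _ _
      _ ≤ L * ‖x + t • d - x‖ * ‖d‖ := by gcongr; exact hlip _ _
      _ = L * ‖d‖ ^ 2 * t := by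
        rw [add_sub_cancel_left, norm_smul, Real.norm_of_nonneg ht.1]; ring
  have hB : ∀ t, HasDerivAt (fun t : ℝ => L / 2 * ‖d‖ ^ 2 * t ^ 2) (L * ‖d‖ ^ 2 * t) t := by
    intro t
    exact ((hasDerivAt_pow 2 t).const_mul _).congr_deriv (by norm_num; ring)
  have := image_norm_le_of_norm_deriv_right_le_deriv_boundary (a := 0) (b := 1)
    (fun t _ => (hφ t).continuousAt.continuousWithinAt) (fun t _ => (hφ t).hasDerivWithinAt)
    (by simp [φ]) hB hbound (right_mem_Icc.2 zero_le_one)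
  simpa [φ, d, Real.norm_eq_abs] using this

end Gradient

section Minimizer

variable {H : Type*} [NormedAddCommGroup H] [InnerProductSpace ℝ H] [CompleteSpace H]

lemma StrongConvexOn.exists_forall_le {ψ : H → ℝ} {μ : ℝ} (hψ : StrongConvexOn univ μ ψ)
    (hμ : 0 < μ) (hc : Continuous ψ) (hbdd : BddBelow (range ψ)) : ∃ w, ∀ v, ψ w ≤ ψ v := by
  set d := ⨅ w, ψ w
  have hd : ∀ w, d ≤ ψ w := ciInf_le hbdd
  have hε : Tendsto (fun n : ℕ => 1 / ((n : ℝ) + 1)) atTop (𝓝 0) :=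
    tendsto_one_div_add_atTop_nhds_zero_nat
  choose v hv using fun n : ℕ => exists_lt_of_ciInf_lt (lt_add_of_pos_right d
    (Nat.one_div_pos_of_nat (n := n)))
  have hmid : ∀ a b, μ / 8 * ‖a - b‖ ^ 2 ≤ (ψ a + ψ b) / 2 - d := by
    intro a b
    have h := hψ.2 (mem_univ a) (mem_univ b) (by norm_num : (0 : ℝ) ≤ 1 / 2)
      (by norm_num : (0 : ℝ) ≤ 1 / 2) (by norm_num)
    simp only [smul_eq_mul] at h
    linarith [hd ((1 / 2 : ℝ) • a + (1 / 2 : ℝ) • b)]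
  have hdist : ∀ n m N : ℕ, N ≤ n → N ≤ m →
      dist (v n) (v m) ≤ √(8 / μ * (1 / ((N : ℝ) + 1))) := by
    intro n m N hn hm
    have hN : ∀ k, N ≤ k → 1 / ((k : ℝ) + 1) ≤ 1 / ((N : ℝ) + 1) := fun k hk =>
      one_div_le_one_div_of_le (by positivity) (by exact_mod_cast Nat.add_le_add_right hk 1)
    rw [dist_eq_norm]
    refine Real.le_sqrt_of_sq_le ?_
    have := hmid (v n) (v m)
    have := hv n; have := hv m; have := hN n hn; have := hN m hm
    rw [div_mul_eq_mul_div, le_div_iff₀ hμ]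
    nlinarith
  have hb : Tendsto (fun N : ℕ => √(8 / μ * (1 / ((N : ℝ) + 1)))) atTop (𝓝 0) := by
    simpa using (hε.const_mul (8 / μ)).sqrt
  obtain ⟨w, hw⟩ := cauchySeq_tendsto_of_complete (cauchySeq_of_le_tendsto_0 _ hdist hb)
  refine ⟨w, fun u => le_trans ?_ (hd u)⟩
  refine le_of_tendsto_of_tendsto' ((hc.tendsto w).comp hw) ?_ fun n => (hv n).le
  simpa using hε.const_add d

end Minimizer

section MaxAffine

variable {H : Type*} [NormedAddCommGroup H] [InnerProductSpace ℝ H] {ι : Type*} [Finite ι]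

lemma exists_continuous_subdifferentiable_interpolant (y : ι → H) (F : ι → ℝ) (v : ι → H)
    (h : ∀ i j, F j + ⟪v j, y i - y j⟫ ≤ F i) :
    ∃ f : H → ℝ, Continuous f ∧ (∀ x, ∃ g, IsSubgradientAt f g x) ∧
      ∀ j, f (y j) = F j ∧ IsSubgradientAt f (v j) (y j) := by
  rcases isEmpty_or_nonempty ι with hι | hι
  · exact ⟨0, continuous_const, fun _ => ⟨0, fun _ => by simp⟩, isEmptyElim⟩
  have := Fintype.ofFinite ι
  set ℓ : ι → H → ℝ := fun j x => F j + ⟪v j, x - y j⟫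
  have hℓ : ∀ j x z, ℓ j x + ⟪v j, z - x⟫ = ℓ j z := fun j x z => by
    simp only [ℓ, inner_sub_right]; ring
  refine ⟨fun x => Finset.univ.sup' Finset.univ_nonempty (ℓ · x), ?_, fun x => ?_, fun j => ?_⟩
  · exact Continuous.finset_sup'_apply _ fun j _ => by fun_prop
  · obtain ⟨j, -, hj⟩ := Finset.exists_mem_eq_sup' Finset.univ_nonempty (ℓ · x)
    refine ⟨v j, fun z => ?_⟩
    dsimp only
    rw [hj, hℓ]
    exact Finset.le_sup' (ℓ · z) (Finset.mem_univ j)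
  · have hval : Finset.univ.sup' Finset.univ_nonempty (ℓ · (y j)) = F j :=
      le_antisymm (Finset.sup'_le _ _ fun i _ => h j i)
        (Finset.le_sup'_of_le _ (Finset.mem_univ j) (by simp [ℓ]))
    refine ⟨hval, fun z => ?_⟩
    dsimp only
    rw [hval]
    exact (Finset.le_sup' (ℓ · z) (Finset.mem_univ j)).trans' (by simp [ℓ])

end MaxAffine

/-! `f = g*` is the Fenchel conjugate of a `μ`-strongly convex `g`, and `V x` is the
maximiser of `⟪x, ·⟫ - g`; hypothesis `hV` is the strong-convexity inequality at `V x`. -/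
section Conjugate

variable {H : Type*} [NormedAddCommGroup H] [InnerProductSpace ℝ H]
  {f g : H → ℝ} {V : H → H} {μ : ℝ}

lemma inner_sub_le_conjugate (hμ : 0 ≤ μ) (hf : ∀ x, f x = ⟪x, V x⟫ - g (V x))
    (hV : ∀ x w, g (V x) + ⟪x, w - V x⟫ + μ / 2 * ‖w - V x‖ ^ 2 ≤ g w) (x w : H) :
    ⟪x, w⟫ - g w ≤ f x := by
  have := hV x w
  rw [hf, inner_sub_right] at *
  nlinarith [sq_nonneg ‖w - V x‖]

lemma isSubgradientAt_conjugate (hμ : 0 ≤ μ) (hf : ∀ x, f x = ⟪x, V x⟫ - g (V x))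
    (hV : ∀ x w, g (V x) + ⟪x, w - V x⟫ + μ / 2 * ‖w - V x‖ ^ 2 ≤ g w) (x : H) :
    IsSubgradientAt f (V x) x := by
  intro z
  have := inner_sub_le_conjugate hμ hf hV z (V x)
  rw [hf x, inner_sub_right, real_inner_comm z (V x), real_inner_comm x (V x)]
  linarith

lemma conjugate_le_add_inner_add (hμ : 0 < μ) (hf : ∀ x, f x = ⟪x, V x⟫ - g (V x))
    (hV : ∀ x w, g (V x) + ⟪x, w - V x⟫ + μ / 2 * ‖w - V x‖ ^ 2 ≤ g w) (x z : H) :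
    f z ≤ f x + ⟪V x, z - x⟫ + μ⁻¹ / 2 * ‖z - x‖ ^ 2 := by
  have h := hV x (V z)
  have hamgm := real_inner_le_half_mul_norm_sq_add hμ (z - x) (V z - V x)
  rw [hf z, hf x]
  simp only [inner_sub_left, inner_sub_right, real_inner_comm x (V x), real_inner_comm z (V x)]
    at h hamgm ⊢
  linarith

lemma norm_sub_le_of_strongly_convex (hμ : 0 < μ)
    (hV : ∀ x w, g (V x) + ⟪x, w - V x⟫ + μ / 2 * ‖w - V x‖ ^ 2 ≤ g w) (x z : H) :
    ‖V x - V z‖ ≤ μ⁻¹ * ‖x - z‖ := by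
  have hmono : μ * ‖V x - V z‖ ^ 2 ≤ ⟪x - z, V x - V z⟫ := by
    have h1 := hV x (V z)
    have h2 := hV z (V x)
    rw [norm_sub_rev (V x)] at h2 ⊢
    simp only [inner_sub_left, inner_sub_right] at h1 h2 ⊢
    linarith
  have hcs := real_inner_le_norm (x - z) (V x - V z)
  rw [le_inv_mul_iff₀ hμ]
  rcases (norm_nonneg (V x - V z)).eq_or_lt with h0 | h0
  · rw [← h0, mul_zero]; positivity
  · nlinarith

end Conjugate

section SmoothInterpolant

variable {H : Type*} [NormedAddCommGroup H] [InnerProductSpace ℝ H] [CompleteSpace H]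
  {ι : Type*} [Finite ι]

lemma exists_smooth_convex_interpolant {L : ℝ} (hL : 0 < L) (y : ι → H) (F : ι → ℝ)
    (v : ι → H) (h : ∀ i j, F j + ⟪v j, y i - y j⟫ + 1 / (2 * L) * ‖v i - v j‖ ^ 2 ≤ F i) :
    ∃ (f : H → ℝ) (V : H → H), (∀ x, IsSubgradientAt f (V x) x) ∧
      (∀ x z, f z ≤ f x + ⟪V x, z - x⟫ + L / 2 * ‖z - x‖ ^ 2) ∧
      (∀ x z, ‖V x - V z‖ ≤ L * ‖x - z‖) ∧
      ∀ j, f (y j) = F j ∧ IsSubgradientAt f (v j) (y j) := by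
  obtain ⟨μ, hμ, rfl⟩ : ∃ μ, 0 < μ ∧ L = μ⁻¹ := ⟨L⁻¹, inv_pos.2 hL, (inv_inv L).symm⟩
  -- `g₀ + μ/2 ‖·‖²` will interpolate the dual data: points `v j`, values `⟪v j, y j⟫ - F j`,
  -- subgradients `y j`.
  obtain ⟨g₀, hg₀c, hg₀sub, hg₀int⟩ := exists_continuous_subdifferentiable_interpolant v
    (fun j => ⟪v j, y j⟫ - F j - μ / 2 * ‖v j‖ ^ 2) (fun j => y j - μ • v j) fun i j => by
      have hgap := linearization_gap_sub_half_mul_norm_sq μ (⟪v j, y j⟫ - F j)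
        (⟪v i, y i⟫ - F i) (y j) (v j) (v i)
      have hij := h j i
      rw [norm_sub_rev, one_div, mul_inv, inv_inv, ← div_eq_inv_mul] at hij
      simp only [inner_sub_right, real_inner_comm (v j) (y j), real_inner_comm (v i) (y j)]
        at hgap hij ⊢
      linarith
  set g := fun w => g₀ w + μ / 2 * ‖w‖ ^ 2
  have hg : ∀ x, StronglyConvex μ fun w => g w - ⟪x, w⟫ := fun x => by
    refine convexOn_univ_of_forall_exists_isSubgradientAt fun w => ?_
    obtain ⟨s, hs⟩ := hg₀sub w
    refine ⟨s - x, fun z => ?_⟩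
    have := hs z
    simp only [g, inner_sub_left, inner_sub_right] at this ⊢
    linarith
  have hmin : ∀ x, ∃ w, ∀ w', g w - ⟪x, w⟫ ≤ g w' - ⟪x, w'⟫ := fun x => by
    refine StrongConvexOn.exists_forall_le (strongConvexOn_iff_convex.2 (hg x)) hμ
      (by fun_prop) ?_
    obtain ⟨s, hs⟩ := hg₀sub 0
    refine ⟨g₀ 0 - μ⁻¹ / 2 * ‖x - s‖ ^ 2, forall_mem_range.2 fun w => ?_⟩
    have := hs w
    have := real_inner_le_half_mul_norm_sq_add hμ (x - s) w
    simp only [g, sub_zero, inner_sub_left] at *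
    nlinarith [sq_nonneg ‖w‖]
  choose V hV using hmin
  have hVstrong : ∀ x w, g (V x) + ⟪x, w - V x⟫ + μ / 2 * ‖w - V x‖ ^ 2 ≤ g w := fun x w => by
    have := (hg x).add_inner_add_le (u := 0) (fun w' => by simpa using hV x w') w
    simp only [inner_sub_right, inner_zero_left] at this ⊢
    linarith
  set f := fun x => ⟪x, V x⟫ - g (V x)
  have hf : ∀ x, f x = ⟪x, V x⟫ - g (V x) := fun _ => rfl
  refine ⟨f, V, isSubgradientAt_conjugate hμ.le hf hVstrong, ?_, ?_, fun j => ?_⟩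
  · exact conjugate_le_add_inner_add hμ hf hVstrong
  · exact norm_sub_le_of_strongly_convex hμ hVstrong
  have hgj : IsSubgradientAt g (y j) (v j) := by
    simpa using (hg₀int j).2.add_half_mul_norm_sq hμ.le
  have hgv : g (v j) = ⟪v j, y j⟫ - F j := by simp [g, (hg₀int j).1]
  have hval : f (y j) = F j := by
    have hlo := inner_sub_le_conjugate hμ.le hf hVstrong (y j) (v j)
    have hhi := hgj (V (y j))
    rw [hf, inner_sub_right, real_inner_comm (v j)] at *
    linarith
  refine ⟨hval, fun z => ?_⟩
  have := inner_sub_le_conjugate hμ.le hf hVstrong z (v j)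
  rw [hgv, real_inner_comm (v j) z] at this
  rw [hval, inner_sub_right]
  linarith

end SmoothInterpolant

section Interpolation

variable {H : Type*} [NormedAddCommGroup H] [InnerProductSpace ℝ H] [CompleteSpace H]

theorem add_inner_add_le_of_memFClass {σ : ℝ} {β : ℝ≥0∞} (hσ : 0 ≤ σ)
    (hσβ : ENNReal.ofReal σ < β) {f : H → ℝ} (hf : MemFClass σ β f) {u w x z : H}
    (hu : IsSubgradientAt f u x) (hw : IsSubgradientAt f w z) :
    f x + ⟪u, z - x⟫ + σ / 2 * ‖z - x‖ ^ 2 + interpCoeff σ β * ‖w - u - σ • (z - x)‖ ^ 2 ≤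
      f z := by
  rcases eq_or_ne β ⊤ with rfl | hβ
  · simpa [interpCoeff] using hf.1.add_inner_add_le hu z
  have hσB : σ < β.toReal := (ENNReal.ofReal_lt_iff_lt_toReal hσ hβ).1 hσβ
  obtain ⟨hdiff, hlip⟩ := hf.2.1 hβ
  have hgap : ∀ a b : H, f b - σ / 2 * ‖b‖ ^ 2 - (f a - σ / 2 * ‖a‖ ^ 2) -
      ⟪gradient f a - σ • a, b - a⟫ =
        f b - f a - ⟪gradient f a, b - a⟫ - σ / 2 * ‖b - a‖ ^ 2 :=
    fun a b => linearization_gap_sub_half_mul_norm_sq σ (f a) (f b) _ a b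
  have hdesc := abs_sub_sub_inner_gradient_le hdiff hlip
  have hlow : ∀ a b : H, f a - σ / 2 * ‖a‖ ^ 2 + ⟪gradient f a - σ • a, b - a⟫ ≤
      f b - σ / 2 * ‖b‖ ^ 2 := fun a =>
    ConvexOn.isSubgradientAt_of_sub_mul_norm_sq_le hf.1 (K := (β.toReal + σ) / 2) fun b => by
      linarith [hgap a b, (abs_le.1 (hdesc a b)).1]
  have hup : ∀ a b : H, f b - σ / 2 * ‖b‖ ^ 2 ≤ f a - σ / 2 * ‖a‖ ^ 2 +
      ⟪gradient f a - σ • a, b - a⟫ + (β.toReal - σ) / 2 * ‖b - a‖ ^ 2 := fun a b => by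
    linarith [hgap a b, (abs_le.1 (hdesc a b)).2]
  have key := add_inner_add_norm_sq_le_of_convex_of_smooth (sub_pos.2 hσB) hlow hup x z
  rw [hu.gradient_eq (hdiff x), hw.gradient_eq (hdiff z),
    show w - σ • z - (u - σ • x) = w - u - σ • (z - x) by module] at key
  rw [interpCoeff, if_neg hβ]
  linarith [linearization_gap_sub_half_mul_norm_sq σ (f x) (f z) u x z]

variable {ι : Type*} [Finite ι]

theorem exists_memFClass_interpolant {σ : ℝ} {β : ℝ≥0∞} (hσ : 0 ≤ σ)
    (hσβ : ENNReal.ofReal σ < β) (y : ι → H) (F : ι → ℝ) (u : ι → H)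
    (h : ∀ i j, F j + ⟪u j, y i - y j⟫ + σ / 2 * ‖y i - y j‖ ^ 2 +
      interpCoeff σ β * ‖u i - u j - σ • (y i - y j)‖ ^ 2 ≤ F i) :
    ∃ f, MemFClass σ β f ∧ ∀ i, f (y i) = F i ∧ IsSubgradientAt f (u i) (y i) := by
  set F₀ := fun i => F i - σ / 2 * ‖y i‖ ^ 2
  set v := fun i => u i - σ • y i
  have h₀ : ∀ i j, F₀ j + ⟪v j, y i - y j⟫ + interpCoeff σ β * ‖v i - v j‖ ^ 2 ≤ F₀ i := by
    intro i j
    rw [show v i - v j = u i - u j - σ • (y i - y j) by simp only [v]; module]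
    simp only [F₀, v]
    linarith [h i j, linearization_gap_sub_half_mul_norm_sq σ (F j) (F i) (u j) (y j) (y i)]
  have hlift : ∀ f₀ : H → ℝ, (∀ j, f₀ (y j) = F₀ j ∧ IsSubgradientAt f₀ (v j) (y j)) →
      ∀ j, f₀ (y j) + σ / 2 * ‖y j‖ ^ 2 = F j ∧
        IsSubgradientAt (fun z => f₀ z + σ / 2 * ‖z‖ ^ 2) (u j) (y j) := fun f₀ hf₀ j =>
    ⟨by simp [(hf₀ j).1, F₀], by simpa [v] using (hf₀ j).2.add_half_mul_norm_sq hσ⟩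
  have hsc : ∀ f₀ : H → ℝ, (∀ x, ∃ g, IsSubgradientAt f₀ g x) →
      StronglyConvex σ fun z => f₀ z + σ / 2 * ‖z‖ ^ 2 := fun f₀ hf₀ => by
    simpa [StronglyConvex] using convexOn_univ_of_forall_exists_isSubgradientAt hf₀
  rcases eq_or_ne β ⊤ with rfl | hβ
  · obtain ⟨f₀, hc, hsub, hint⟩ :=
      exists_continuous_subdifferentiable_interpolant y F₀ v (by simpa [interpCoeff] using h₀)
    exact ⟨_, ⟨hsc f₀ hsub, fun h => absurd rfl h,
      fun _ => (hc.add (by fun_prop)).lowerSemicontinuous⟩, hlift f₀ hint⟩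
  have hσB : σ < β.toReal := (ENNReal.ofReal_lt_iff_lt_toReal hσ hβ).1 hσβ
  obtain ⟨f₀, V, hsub, hup, hlip, hint⟩ := exists_smooth_convex_interpolant (sub_pos.2 hσB)
    y F₀ v (by simpa [interpCoeff, hβ] using h₀)
  have hgrad : ∀ x, HasGradientAt (fun z => f₀ z + σ / 2 * ‖z‖ ^ 2) (V x + σ • x) x :=
    fun x => hasGradientAt_of_abs_sub_sub_inner_le (C := β.toReal / 2) fun z => by
      have := linearization_gap_sub_half_mul_norm_sq σ (f₀ x + σ / 2 * ‖x‖ ^ 2)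
        (f₀ z + σ / 2 * ‖z‖ ^ 2) (V x + σ • x) x z
      simp only [add_sub_cancel_right] at this
      rw [abs_le]
      constructor <;> nlinarith [hsub x z, hup x z, sq_nonneg ‖z - x‖]
  refine ⟨_, ⟨hsc f₀ fun x => ⟨V x, hsub x⟩, fun _ => ⟨fun x => (hgrad x).differentiableAt,
    fun x z => ?_⟩, fun h => absurd h hβ⟩, hlift f₀ hint⟩
  rw [(hgrad x).gradient, (hgrad z).gradient]
  calc ‖V x + σ • x - (V z + σ • z)‖ = ‖(V x - V z) + σ • (x - z)‖ := by congr 1; module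
    _ ≤ ‖V x - V z‖ + σ * ‖x - z‖ :=
      (norm_add_le _ _).trans_eq (by rw [norm_smul, Real.norm_of_nonneg hσ])
    _ ≤ (β.toReal - σ) * ‖x - z‖ + σ * ‖x - z‖ := by gcongr; exact hlip x z
    _ = β.toReal * ‖x - z‖ := by ring

end Interpolation

theorem interpolation_componentwise_general
    {H : Type*} [NormedAddCommGroup H] [InnerProductSpace ℝ H] [CompleteSpace H]
    {ι : Type*} [Fintype ι] {m : ℕ}
    (σ : Fin m → ℝ) (β : Fin m → ℝ≥0∞)
    (hσβ : ∀ l, 0 ≤ σ l ∧ ENNReal.ofReal (σ l) < β l)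
    (Y : ι → Fin m → H) (Fv : ι → Fin m → ℝ) (U : ι → Fin m → H) :
    (∃ f : Fin m → H → ℝ, (∀ l, MemFClass (σ l) (β l) (f l)) ∧
        ∀ i, ∀ l, f l (Y i l) = Fv i l ∧ IsSubgradientAt (f l) (U i l) (Y i l)) ↔
      ∀ l, ∀ i j, Fv j l + (inner ℝ (U j l) (Y i l - Y j l) : ℝ) +
          σ l / 2 * ‖Y i l - Y j l‖ ^ 2 +
          interpCoeff (σ l) (β l) * ‖U i l - U j l - σ l • (Y i l - Y j l)‖ ^ 2 ≤
        Fv i l := by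
  constructor
  · rintro ⟨f, hf, hint⟩ l i j
    have := add_inner_add_le_of_memFClass (hσβ l).1 (hσβ l).2 (hf l) (hint j l).2 (hint i l).2
    rwa [(hint i l).1, (hint j l).1] at this
  · intro h
    choose f hf hint using fun l =>
      exists_memFClass_interpolant (hσβ l).1 (hσβ l).2 (Y · l) (Fv · l) (U · l) (h l)
    exact ⟨f, hf, fun i l => hint l i⟩

/-- Componentwise interpolation theorem for the classes `F_{σ_l,β_l}(H)`,
`l = 1,…,m`. -/
theorem interpolation_componentwise
    {H : Type*} [NormedAddCommGroup H] [InnerProductSpace ℝ H] [CompleteSpace H]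
    {ι : Type*} [Fintype ι] {m : ℕ} (hm : 1 ≤ m)
    (σ : Fin m → ℝ) (β : Fin m → ℝ≥0∞)
    (hσβ : ∀ l, 0 ≤ σ l ∧ ENNReal.ofReal (σ l) < β l)
    (Y : ι → Fin m → H) (Fv : ι → Fin m → ℝ) (U : ι → Fin m → H) :
    (∃ f : Fin m → H → ℝ, (∀ l, MemFClass (σ l) (β l) (f l)) ∧
        ∀ i, ∀ l, f l (Y i l) = Fv i l ∧ IsSubgradientAt (f l) (U i l) (Y i l)) ↔
      ∀ l, ∀ i j, Fv j l + (inner ℝ (U j l) (Y i l - Y j l) : ℝ) +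
          σ l / 2 * ‖Y i l - Y j l‖ ^ 2 +
          interpCoeff (σ l) (β l) * ‖U i l - U j l - σ l • (Y i l - Y j l)‖ ^ 2 ≤
        Fv i l :=
  interpolation_componentwise_general σ β hσβ Y Fv U
end

section
/- Suppose Assumption 2 holds: D is lower triangular with nonpositive diagonal entries, and for every i ∈ {1,…,m} either β_i < +∞ or D_{ii} < 0. Then for every choice of f_i ∈ F_{σ_i,β_i}(H) (i = 1,…,m) and every x ∈ H^n, there exist unique u ∈ H^m and y ∈ H^m such that y = (C⊗Id)x + (D⊗Id)u and u_i ∈ ∂f_i(y_i) for all i. Consequently, for any initial point x_0 ∈ H^n the algorithm x_{k+1} = (A⊗Id)x_k + (B⊗Id)u_k, y_k = (C⊗Id)x_k + (D⊗Id)u_k, u_k ∈ ∂f(y_k), F_k = f(y_k) produces a unique infinite sequence {(x_k, u_k, y_k, F_k)}_{k≥0}. -/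
open scoped ENNReal
open Matrix

/-- `(M ⊗ Id) z` for a real matrix `M` acting on tuples of Hilbert-space vectors. -/
def matVecH {H : Type*} [AddCommGroup H] [Module ℝ H] {p q : Type*} [Fintype q]
    (M : Matrix p q ℝ) (z : q → H) : p → H :=
  fun i => ∑ j, M i j • z j

/-- The point `(x, u, y, F)` is algorithm-consistent for `f`. -/
def AlgConsistent {H : Type*} [NormedAddCommGroup H] [InnerProductSpace ℝ H]
    {n m : ℕ} (C : Matrix (Fin m) (Fin n) ℝ) (D : Matrix (Fin m) (Fin m) ℝ)
    (f : Fin m → H → ℝ) (x : Fin n → H) (u y : Fin m → H) (F : Fin m → ℝ) : Prop :=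
  y = matVecH C x + matVecH D u ∧ (∀ i, IsSubgradientAt (f i) (u i) (y i)) ∧
    ∀ i, F i = f i (y i)

/-- `(x, u, y, F)` is a fixed point of the algorithm. -/
def IsFixedPoint {H : Type*} [NormedAddCommGroup H] [InnerProductSpace ℝ H]
    {n m : ℕ} (A : Matrix (Fin n) (Fin n) ℝ) (B : Matrix (Fin n) (Fin m) ℝ)
    (C : Matrix (Fin m) (Fin n) ℝ) (D : Matrix (Fin m) (Fin m) ℝ)
    (f : Fin m → H → ℝ) (x : Fin n → H) (u y : Fin m → H) (F : Fin m → ℝ) : Prop :=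
  x = matVecH A x + matVecH B u ∧ AlgConsistent C D f x u y F

/-- `(xp, up, yp, Fp)` is a successor of an algorithm-consistent point with data `(x, u)`. -/
def IsSuccessor {H : Type*} [NormedAddCommGroup H] [InnerProductSpace ℝ H]
    {n m : ℕ} (A : Matrix (Fin n) (Fin n) ℝ) (B : Matrix (Fin n) (Fin m) ℝ)
    (C : Matrix (Fin m) (Fin n) ℝ) (D : Matrix (Fin m) (Fin m) ℝ)
    (f : Fin m → H → ℝ) (x : Fin n → H) (u : Fin m → H)
    (xp : Fin n → H) (up yp : Fin m → H) (Fp : Fin m → ℝ) : Prop :=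
  xp = matVecH A x + matVecH B u ∧ AlgConsistent C D f xp up yp Fp

/-- The matrix `N = [I_{m−1}; −𝟏ᵀ] ∈ ℝ^{m×(m−1)}`. -/
def Nmat (m : ℕ) : Matrix (Fin m) (Fin (m - 1)) ℝ :=
  Matrix.of fun i j => if (i : ℕ) = (j : ℕ) then 1 else if (i : ℕ) = m - 1 then -1 else 0

/-- Assumption 1: the range and null-space conditions on `(A, B, C, D)`. -/
def Assumption1 {n m : ℕ} (A : Matrix (Fin n) (Fin n) ℝ) (B : Matrix (Fin n) (Fin m) ℝ)
    (C : Matrix (Fin m) (Fin n) ℝ) (D : Matrix (Fin m) (Fin m) ℝ) : Prop :=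
  LinearMap.range (Matrix.fromBlocks (B * Nmat m) 0 (D * Nmat m)
      (Matrix.of fun (_ : Fin m) (_ : Fin 1) => (-1 : ℝ))).mulVecLin ≤
    LinearMap.range (Matrix.fromRows (1 - A) (-C)).mulVecLin ∧
  LinearMap.ker (Matrix.fromCols (1 - A) (-B)).mulVecLin ≤
    LinearMap.ker (Matrix.fromBlocks ((Nmat m)ᵀ * C) ((Nmat m)ᵀ * D) 0
      (Matrix.of fun (_ : Fin 1) (_ : Fin m) => (1 : ℝ))).mulVecLin

/-- Assumption 2: `D` lower triangular with nonpositive diagonal, and for each `i`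
either `β_i < +∞` or `D_{ii} < 0`. -/
def Assumption2 {m : ℕ} (β : Fin m → ℝ≥0∞) (D : Matrix (Fin m) (Fin m) ℝ) : Prop :=
  (∀ i j : Fin m, (i : ℕ) < (j : ℕ) → D i j = 0) ∧ (∀ i, D i i ≤ 0) ∧
    ∀ i, β i ≠ ⊤ ∨ D i i < 0

/-!
Since `D` is lower triangular, the inclusion `y = Cx + Du`, `u ∈ ∂f(y)` can be solved by forward
substitution: its `i`-th row reads `y_i = v_i + D_ii u_i`, `u_i ∈ ∂f_i(y_i)`, where `v_i` only
involves the `u_j` with `j < i`. If `D_ii < 0` this is the proximal equation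
`y_i = prox_{-D_ii f_i}(v_i)`: `y_i` is the minimiser of the strongly convex lower semicontinuous
function `f_i + ‖· - v_i‖² / (-2 D_ii)` (minimising sequences are Cauchy), and it is unique because
`∂f_i` is monotone. If `D_ii = 0` then `f_i` is smooth, `y_i = v_i`, and `∇f_i(v_i)` is the only
subgradient there. Unique solvability of one step determines the whole trajectory.
-/

open Set Filter Topology

section Minimizer

variable {E : Type*} [NormedAddCommGroup E] [NormedSpace ℝ E] [CompleteSpace E]

theorem StrongConvexOn.exists_isMinOn {g : E → ℝ} {m : ℝ} (hm : 0 < m)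
    (hg : StrongConvexOn univ m g) (hlsc : LowerSemicontinuous g) (hb : BddBelow (range g)) :
    ∃ y, IsMinOn g univ y := by
  set S := sInf (range g)
  have hS : ∀ z, S ≤ g z := fun z => csInf_le hb (mem_range_self z)
  obtain ⟨a, ha_anti, ha, ha_mem⟩ := exists_seq_tendsto_sInf (range_nonempty g) hb
  choose z hz using ha_mem
  have hmid : ∀ j k, m / 8 * ‖z j - z k‖ ^ 2 ≤ (a j - S + (a k - S)) / 2 := by
    intro j k
    have h := hg.2 (mem_univ (z j)) (mem_univ (z k)) (by norm_num : (0 : ℝ) ≤ 1 / 2)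
      (by norm_num : (0 : ℝ) ≤ 1 / 2) (by norm_num)
    have hS_mid := hS ((1 / 2 : ℝ) • z j + (1 / 2 : ℝ) • z k)
    simp only [smul_eq_mul, hz] at h
    nlinarith
  have hcauchy : CauchySeq z := by
    refine cauchySeq_of_le_tendsto_0 (fun N => √(8 / m * (a N - S))) (fun j k N hj hk => ?_) ?_
    · have hjN := ha_anti hj
      have hkN := ha_anti hk
      have := hmid j k
      rw [Real.le_sqrt dist_nonneg (mul_nonneg (by positivity) (by linarith [hS (z N), hz N])),
        dist_eq_norm]
      rw [div_mul_eq_mul_div, le_div_iff₀ (by positivity)]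
      nlinarith
    · simpa [S] using ((ha.sub_const S).const_mul (8 / m)).sqrt
  obtain ⟨y, hy⟩ := cauchySeq_tendsto_of_complete hcauchy
  refine ⟨y, isMinOn_univ_iff.2 fun w => le_trans ?_ (hS w)⟩
  by_contra! hlt
  obtain ⟨c, hSc, hcy⟩ := exists_between hlt
  have above : ∀ᶠ k in atTop, c < g (z k) := hy.eventually (hlsc y c hcy)
  have below : ∀ᶠ k in atTop, g (z k) < c := by
    simpa only [hz] using ha.eventually (gt_mem_nhds hSc)
  obtain ⟨k, hk₁, hk₂⟩ := (above.and below).exists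
  linarith

end Minimizer

section Subdifferential

variable {H : Type*} [NormedAddCommGroup H] [InnerProductSpace ℝ H] {f : H → ℝ}

theorem StronglyConvex.convexOn {σ : ℝ} (hσ : 0 ≤ σ) (h : StronglyConvex σ f) :
    ConvexOn ℝ univ f :=
  (strongConvexOn_iff_convex.2 h).convexOn fun r => mul_nonneg (by positivity) (sq_nonneg r)

theorem IsSubgradientAt.inner_sub_nonneg {u₁ u₂ y₁ y₂ : H} (h₁ : IsSubgradientAt f u₁ y₁)
    (h₂ : IsSubgradientAt f u₂ y₂) : 0 ≤ inner ℝ (u₁ - u₂) (y₁ - y₂) := by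
  have e₁ := h₁ y₂
  have e₂ := h₂ y₁
  rw [← neg_sub y₁ y₂, inner_neg_right] at e₁
  rw [inner_sub_left]
  linarith

theorem IsSubgradientAt.eq_of_add_smul {v u₁ u₂ : H} {d : ℝ} (hd : d < 0)
    (h₁ : IsSubgradientAt f u₁ (v + d • u₁)) (h₂ : IsSubgradientAt f u₂ (v + d • u₂)) :
    u₁ = u₂ := by
  have hmono := h₁.inner_sub_nonneg h₂
  rw [show v + d • u₁ - (v + d • u₂) = d • (u₁ - u₂) by module, real_inner_smul_right,
    real_inner_self_eq_norm_sq] at hmono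
  have hsq : ‖u₁ - u₂‖ ^ 2 = 0 := le_antisymm (nonpos_of_mul_nonneg_right hmono hd) (sq_nonneg _)
  rwa [sq_eq_zero_iff, norm_eq_zero, sub_eq_zero] at hsq

theorem ConvexOn.bddBelow_add_mul_norm_sub_sq (hf : ConvexOn ℝ univ f)
    (hlsc : LowerSemicontinuous f) {c : ℝ} (hc : 0 < c) (v : H) :
    BddBelow (range fun z => f z + c * ‖z - v‖ ^ 2) := by
  obtain ⟨l, a, hl, -⟩ := hf.exists_affine_le_of_lt (𝕜 := ℝ) (mem_univ 0) (sub_one_lt (f 0))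
    isClosed_univ (hlsc.lowerSemicontinuousOn univ)
  refine ⟨a + l v - ‖l‖ ^ 2 / (4 * c), ?_⟩
  rintro _ ⟨z, rfl⟩
  have hminor : l z + a ≤ f z := by simpa using hl ⟨z, trivial⟩
  have hlin : -(‖l‖ * ‖z - v‖) ≤ l (z - v) := neg_le_of_abs_le (l.le_opNorm (z - v))
  have hquad : ‖l‖ * ‖z - v‖ - c * ‖z - v‖ ^ 2 ≤ ‖l‖ ^ 2 / (4 * c) := by
    rw [le_div_iff₀ (by positivity)]
    nlinarith [sq_nonneg (2 * c * ‖z - v‖ - ‖l‖)]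
  rw [map_sub] at hlin
  linarith

theorem ConvexOn.strongConvexOn_add_mul_norm_sub_sq (hf : ConvexOn ℝ univ f) (c : ℝ) (v : H) :
    StrongConvexOn univ (2 * c) fun z => f z + c * ‖z - v‖ ^ 2 := by
  rw [strongConvexOn_iff_convex]
  have hlin := (((-(2 * c)) • innerSL ℝ v : H →L[ℝ] ℝ) : H →ₗ[ℝ] ℝ).convexOn convex_univ
  refine (hf.add ((convexOn_const (c * ‖v‖ ^ 2) convex_univ).add hlin)).congr fun z _ => ?_
  simp only [Pi.add_apply, ContinuousLinearMap.coe_coe, _root_.smul_apply,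
    innerSL_apply_apply, smul_eq_mul, norm_sub_sq_real, real_inner_comm v z]
  ring

variable [CompleteSpace H]

theorem IsSubgradientAt.eq_of_hasGradientAt {u g x : H} (hu : IsSubgradientAt f u x)
    (hf : HasGradientAt f g x) : u = g := by
  have hmin : IsLocalMin (fun z => f z - inner ℝ u z) x :=
    Eventually.of_forall fun z => by
      have := hu z
      rw [inner_sub_right] at this
      linarith
  have hderiv : HasFDerivAt (fun z => f z - inner ℝ u z)
      (InnerProductSpace.toDual ℝ H g - InnerProductSpace.toDual ℝ H u) x :=
    hf.hasFDerivAt.sub (InnerProductSpace.toDual ℝ H u).hasFDerivAt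
  have := hmin.hasFDerivAt_eq_zero hderiv
  exact ((InnerProductSpace.toDual ℝ H).injective (sub_eq_zero.1 this)).symm

theorem ConvexOn.isSubgradientAt_neg_of_isMinOn_add {q : H → ℝ} {g y : H}
    (hf : ConvexOn ℝ univ f) (hq : HasGradientAt q g y) (hmin : IsMinOn (f + q) univ y) :
    IsSubgradientAt f (-g) y := by
  intro z
  set ψ : ℝ → ℝ := fun t => t * (f z - f y) + q (y + t • (z - y))
  have hψ : HasDerivAt ψ (f z - f y + inner ℝ g (z - y)) 0 := by
    have hline : HasDerivAt (fun t : ℝ => q (y + t • (z - y))) (inner ℝ g (z - y)) 0 :=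
      hq.hasFDerivAt.hasLineDerivAt (z - y)
    exact (hasDerivAt_mul_const (f z - f y)).add hline
  have hmin_ψ : IsLocalMinOn ψ (Icc 0 1) 0 := by
    refine eventually_of_mem self_mem_nhdsWithin fun t ht => ?_
    have hconv := hf.2 (mem_univ y) (mem_univ z) (sub_nonneg.2 ht.2) ht.1 (by ring)
    have hseg : (1 - t) • y + t • z = y + t • (z - y) := by module
    have := isMinOn_univ_iff.1 hmin (y + t • (z - y))
    simp only [hseg, smul_eq_mul, Pi.add_apply] at hconv this
    simp only [ψ, zero_smul, add_zero, zero_mul, zero_add]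
    linarith
  have hone : (1 : ℝ) ∈ posTangentConeAt (Icc 0 1) 0 :=
    mem_posTangentConeAt_of_segment_subset (by simp [segment_eq_Icc])
  have := hmin_ψ.hasFDerivWithinAt_nonneg hψ.hasFDerivAt.hasFDerivWithinAt hone
  rw [ContinuousLinearMap.toSpanSingleton_apply, one_smul] at this
  rw [inner_neg_left]
  linarith

theorem ConvexOn.isSubgradientAt_of_hasGradientAt {g x : H} (hf : ConvexOn ℝ univ f)
    (hg : HasGradientAt f g x) : IsSubgradientAt f g x := by
  have hneg : HasGradientAt (-f) (-g) x :=
    hasGradientAt_iff_hasFDerivAt.2 (by simpa using hg.hasFDerivAt.neg)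
  simpa using hf.isSubgradientAt_neg_of_isMinOn_add hneg
    (fun z _ => by simp : IsMinOn (f + -f) univ x)

theorem hasGradientAt_mul_norm_sub_sq (c : ℝ) (v y : H) :
    HasGradientAt (fun z => c * ‖z - v‖ ^ 2) ((2 * c) • (y - v)) y := by
  rw [hasGradientAt_iff_hasFDerivAt]
  have h := ((hasFDerivAt_id y).sub_const v).norm_sq.const_mul c
  simp only [id] at h
  refine h.congr_fderiv ?_
  ext w
  simp only [map_sub, ContinuousLinearMap.comp_id, _root_.smul_apply, _root_.sub_apply,
    coe_innerSL_apply, nsmul_eq_mul, Nat.cast_ofNat, smul_eq_mul, map_smul,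
    InnerProductSpace.toDual_apply_apply]
  ring

theorem ConvexOn.exists_isSubgradientAt_add_smul (hf : ConvexOn ℝ univ f)
    (hlsc : LowerSemicontinuous f) {d : ℝ} (hd : d < 0) (v : H) :
    ∃ u, IsSubgradientAt f u (v + d • u) := by
  -- `c` is chosen so that `u := -∇(c‖· - v‖²)(y)` satisfies `y = v + d • u`.
  set c := -(2 * d)⁻¹
  have hc : 0 < c := by simp only [c, neg_pos, inv_lt_zero]; linarith
  have hdc : d * (2 * c) = -1 := by simp only [c]; field_simp [hd.ne]
  have hcont : Continuous fun z => c * ‖z - v‖ ^ 2 := by fun_prop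
  obtain ⟨y, hy⟩ := (hf.strongConvexOn_add_mul_norm_sub_sq c v).exists_isMinOn (by positivity)
    (hlsc.add hcont.lowerSemicontinuous) (hf.bddBelow_add_mul_norm_sub_sq hlsc hc v)
  have hsub := hf.isSubgradientAt_neg_of_isMinOn_add (hasGradientAt_mul_norm_sub_sq c v y) hy
  refine ⟨(2 * c) • (v - y), ?_⟩
  have hy_eq : v + d • (2 * c) • (v - y) = y := by
    rw [smul_smul, hdc]
    module
  rwa [hy_eq, ← neg_sub y v, smul_neg]

theorem MemFClass.existsUnique_isSubgradientAt_add_smul {σ : ℝ} {β : ℝ≥0∞} (hσ : 0 ≤ σ)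
    (hf : MemFClass σ β f) {d : ℝ} (hd : d ≤ 0) (hβd : β ≠ ⊤ ∨ d < 0) (v : H) :
    ∃! p : H × H, p.2 = v + d • p.1 ∧ IsSubgradientAt f p.1 p.2 := by
  have hconv := hf.1.convexOn hσ
  rcases hd.lt_or_eq with hneg | rfl
  · have hlsc : LowerSemicontinuous f := by
      by_cases hβ : β = ⊤
      · exact hf.2.2 hβ
      · exact ((hf.2.1 hβ).1.continuous).lowerSemicontinuous
    obtain ⟨u, hu⟩ := hconv.exists_isSubgradientAt_add_smul hlsc hneg v
    refine ⟨(u, v + d • u), ⟨rfl, hu⟩, ?_⟩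
    rintro ⟨u', y'⟩ ⟨hy', hu'⟩
    dsimp only at hy' hu'
    subst hy'
    rw [hu'.eq_of_add_smul hneg hu]
  · have hdiff : Differentiable ℝ f := (hf.2.1 (hβd.resolve_right (lt_irrefl 0))).1
    have hgrad := (hdiff v).hasGradientAt
    refine ⟨(gradient f v, v), ⟨by simp, hconv.isSubgradientAt_of_hasGradientAt hgrad⟩, ?_⟩
    rintro ⟨u', y'⟩ ⟨hy', hu'⟩
    dsimp only at hy' hu'
    rw [zero_smul, add_zero] at hy'
    subst hy'
    rw [hu'.eq_of_hasGradientAt hgrad]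

end Subdifferential

section Triangular

theorem existsUnique_fun_of_triangular {ι α : Type*} [LT ι] [WellFoundedLT ι] [Nonempty α]
    {P : ι → (ι → α) → α → Prop}
    (hloc : ∀ i (w w' : ι → α), (∀ j < i, w j = w' j) → P i w = P i w')
    (h : ∀ i w, ∃! a, P i w a) : ∃! w : ι → α, ∀ i, P i w (w i) := by
  classical
  let extend (i : ι) (w : ∀ j, j < i → α) (j : ι) : α :=
    if hj : j < i then w j hj else Classical.arbitrary α
  let w : ι → α := WellFoundedLT.fix fun i w => (h i (extend i w)).exists.choose
  have hw_eq : ∀ i, w i = (h i (extend i fun j _ => w j)).exists.choose :=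
    WellFoundedLT.fix_eq _
  have hw : ∀ i, P i w (w i) := by
    intro i
    rw [hw_eq i, hloc i w (extend i fun j _ => w j) fun j hj => by simp [extend, hj]]
    exact (h i _).exists.choose_spec
  refine ⟨w, hw, fun w' hw' => funext fun i => ?_⟩
  induction i using WellFoundedLT.induction with
  | ind i ih =>
    exact (h i w).unique (hloc i w' w ih ▸ hw' i) (hw i)

variable {H : Type*} [NormedAddCommGroup H] [InnerProductSpace ℝ H]
  {ι : Type*} [Fintype ι] [LinearOrder ι] [LocallyFiniteOrderBot ι]

theorem matVecH_apply_of_lowerTriangular {D : Matrix ι ι ℝ} (hD : ∀ i j, i < j → D i j = 0)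
    (u : ι → H) (i : ι) :
    matVecH D u i = ∑ j ∈ Finset.Iio i, D i j • u j + D i i • u i := by
  rw [Finset.sum_Iio_add_eq_sum_Iic]
  refine (Finset.sum_subset (Finset.subset_univ _) fun j _ hj => ?_).symm
  rw [hD i j (lt_of_not_ge (by simpa using hj)), zero_smul]

theorem existsUnique_isSubgradientAt_of_lowerTriangular (f : ι → H → ℝ) {D : Matrix ι ι ℝ}
    (hD : ∀ i j, i < j → D i j = 0)
    (hdiag : ∀ i v, ∃! p : H × H, p.2 = v + D i i • p.1 ∧ IsSubgradientAt (f i) p.1 p.2)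
    (b : ι → H) :
    ∃! uy : (ι → H) × (ι → H),
      uy.2 = b + matVecH D uy.1 ∧ ∀ i, IsSubgradientAt (f i) (uy.1 i) (uy.2 i) := by
  let P (i : ι) (w : ι → H × H) (p : H × H) : Prop :=
    p.2 = (b i + ∑ j ∈ Finset.Iio i, D i j • (w j).1) + D i i • p.1 ∧
      IsSubgradientAt (f i) p.1 p.2
  have hloc : ∀ i (w w' : ι → H × H), (∀ j < i, w j = w' j) → P i w = P i w' := by
    intro i w w' hww'
    have hsum : ∑ j ∈ Finset.Iio i, D i j • (w j).1 = ∑ j ∈ Finset.Iio i, D i j • (w' j).1 :=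
      Finset.sum_congr rfl fun j hj => by rw [hww' j (Finset.mem_Iio.1 hj)]
    simp only [P, hsum]
  refine ((Equiv.arrowProdEquivProdArrow ι (fun _ => H) fun _ => H).existsUnique_congr
    fun w => ?_).1 (existsUnique_fun_of_triangular hloc fun i w => hdiag i _)
  simp only [P, Equiv.arrowProdEquivProdArrow, Equiv.coe_fn_mk, funext_iff, Pi.add_apply,
    matVecH_apply_of_lowerTriangular hD, add_assoc, forall_and]

end Triangular

theorem existsUnique_trajectory {X Z : Type*} {R : X → Z → Prop} (h : ∀ x, ∃! z, R x z)
    (T : X → Z → X) (x₀ : X) :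
    ∃! s : ℕ → X × Z,
      (s 0).1 = x₀ ∧ ∀ k, R (s k).1 (s k).2 ∧ (s (k + 1)).1 = T (s k).1 (s k).2 := by
  choose z hz hz_unique using h
  let step (x : X) : X × Z := (x, z x)
  let s (k : ℕ) : X × Z := Nat.rec (step x₀) (fun _ p => step (T p.1 p.2)) k
  refine ⟨s, ⟨rfl, fun k => ⟨?_, rfl⟩⟩, ?_⟩
  · cases k <;> exact hz _
  · rintro t ⟨ht₀, ht⟩
    have ht_step : ∀ k, t k = step (t k).1 := fun k => Prod.ext rfl (hz_unique _ _ (ht k).1)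
    funext k
    induction k with
    | zero => rw [ht_step 0, ht₀]; rfl
    | succ k ih => rw [ht_step (k + 1), (ht k).2, ih]

theorem existsUnique_algConsistent {H : Type*} [NormedAddCommGroup H] [InnerProductSpace ℝ H]
    {n m : ℕ} {C : Matrix (Fin m) (Fin n) ℝ} {D : Matrix (Fin m) (Fin m) ℝ}
    {f : Fin m → H → ℝ} {x : Fin n → H}
    (h : ∃! uy : (Fin m → H) × (Fin m → H),
      uy.2 = matVecH C x + matVecH D uy.1 ∧ ∀ i, IsSubgradientAt (f i) (uy.1 i) (uy.2 i)) :
    ∃! z : (Fin m → H) × (Fin m → H) × (Fin m → ℝ), AlgConsistent C D f x z.1 z.2.1 z.2.2 := by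
  obtain ⟨⟨u, y⟩, ⟨hy, hu⟩, huy_unique⟩ := h
  refine ⟨(u, y, fun i => f i (y i)), ⟨hy, hu, fun i => rfl⟩, ?_⟩
  rintro ⟨u', y', F'⟩ ⟨hy', hu', hF'⟩
  obtain ⟨rfl, rfl⟩ := Prod.mk.inj (huy_unique (u', y') ⟨hy', hu'⟩)
  simp only [Prod.mk.injEq, true_and]
  exact funext hF'

theorem assumption2_well_posedness_general
    {H : Type*} [NormedAddCommGroup H] [InnerProductSpace ℝ H] [CompleteSpace H]
    {n m : ℕ}
    (A : Matrix (Fin n) (Fin n) ℝ) (B : Matrix (Fin n) (Fin m) ℝ)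
    (C : Matrix (Fin m) (Fin n) ℝ) (D : Matrix (Fin m) (Fin m) ℝ)
    (σ : Fin m → ℝ) (β : Fin m → ℝ≥0∞)
    (hσβ : ∀ i, 0 ≤ σ i ∧ ENNReal.ofReal (σ i) < β i)
    (h2 : Assumption2 β D)
    (f : Fin m → H → ℝ) (hf : ∀ i, MemFClass (σ i) (β i) (f i)) :
    -- unique solvability of the implicit update equations
    (∀ x : Fin n → H, ∃! uy : (Fin m → H) × (Fin m → H),
        uy.2 = matVecH C x + matVecH D uy.1 ∧
          ∀ i, IsSubgradientAt (f i) (uy.1 i) (uy.2 i)) ∧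
    -- unique infinite trajectory from any initial point
    (∀ x0 : Fin n → H,
        ∃! s : ℕ → (Fin n → H) × (Fin m → H) × (Fin m → H) × (Fin m → ℝ),
          (s 0).1 = x0 ∧ ∀ k : ℕ,
            AlgConsistent C D f (s k).1 (s k).2.1 (s k).2.2.1 (s k).2.2.2 ∧
            (s (k + 1)).1 = matVecH A (s k).1 + matVecH B (s k).2.1) := by
  obtain ⟨hD_lower, hD_diag, hβD⟩ := h2
  have hsystem : ∀ x : Fin n → H, ∃! uy : (Fin m → H) × (Fin m → H),
      uy.2 = matVecH C x + matVecH D uy.1 ∧ ∀ i, IsSubgradientAt (f i) (uy.1 i) (uy.2 i) :=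
    fun x => existsUnique_isSubgradientAt_of_lowerTriangular f (fun i j => hD_lower i j)
      (fun i => (hf i).existsUnique_isSubgradientAt_add_smul (hσβ i).1 (hD_diag i) (hβD i))
      (matVecH C x)
  exact ⟨hsystem, existsUnique_trajectory (fun x => existsUnique_algConsistent (hsystem x))
    fun x z => matVecH A x + matVecH B z.1⟩

/-- Well-posedness: under Assumption 2 the update equations have a unique solution,
and the algorithm produces a unique infinite sequence from any initial point. -/
theorem assumption2_well_posedness
    {H : Type*} [NormedAddCommGroup H] [InnerProductSpace ℝ H] [CompleteSpace H]
    {n m : ℕ} (hn : 1 ≤ n) (hm : 1 ≤ m)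
    (A : Matrix (Fin n) (Fin n) ℝ) (B : Matrix (Fin n) (Fin m) ℝ)
    (C : Matrix (Fin m) (Fin n) ℝ) (D : Matrix (Fin m) (Fin m) ℝ)
    (σ : Fin m → ℝ) (β : Fin m → ℝ≥0∞)
    (hσβ : ∀ i, 0 ≤ σ i ∧ ENNReal.ofReal (σ i) < β i)
    (h2 : Assumption2 β D)
    (f : Fin m → H → ℝ) (hf : ∀ i, MemFClass (σ i) (β i) (f i)) :
    -- unique solvability of the implicit update equations
    (∀ x : Fin n → H, ∃! uy : (Fin m → H) × (Fin m → H),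
        uy.2 = matVecH C x + matVecH D uy.1 ∧
          ∀ i, IsSubgradientAt (f i) (uy.1 i) (uy.2 i)) ∧
    -- unique infinite trajectory from any initial point
    (∀ x0 : Fin n → H,
        ∃! s : ℕ → (Fin n → H) × (Fin m → H) × (Fin m → H) × (Fin m → ℝ),
          (s 0).1 = x0 ∧ ∀ k : ℕ,
            AlgConsistent C D f (s k).1 (s k).2.1 (s k).2.2.1 (s k).2.2.2 ∧
            (s (k + 1)).1 = matVecH A (s k).1 + matVecH B (s k).2.1) :=
  assumption2_well_posedness_general A B C D σ β hσβ h2 f hf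
end
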